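/- arXiv:2506.16230 — 2 statements merged into one kernel-verified Lean document; each statement's English description precedes it below -/
import Mathlib

section
/- Fix δ > 0. Suppose φ satisfies the smoothness assumption and is regularly varying with index p > 1, and the probability measure P₀ on ℝ is heavy-tailed with index γ > 0. Then for every γ′ ∈ ((p−1)γ/p, γ) there exists a probability measure P₁ ∈ B_{φ,δ}(P₀) whose survival function F̄_{P₁} is regularly varying with index −γ′. -/
open MeasureTheory Filter Set
open scoped ENNReal NNReal Topology Classical

noncomputable section

/-- `f` is regularly varying at infinity with index `ρ`:
`f (t*x) / f t → x ^ ρ` as `t → ∞` for every `x > 0`.  Slowly varying means index `0`. -/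
def RegVary (f : ℝ → ℝ) (ρ : ℝ) : Prop :=
  ∀ x : ℝ, 0 < x → Tendsto (fun t : ℝ => f (t * x) / f t) atTop (𝓝 (x ^ ρ))

/-- Value-at-Risk at level `1 - s`: `v_{1-s}(P) = inf {u | P((u,∞)) ≤ s}`. -/
def VaR (P : Measure ℝ) (s : ℝ) : ℝ :=
  sInf {u : ℝ | P (Ioi u) ≤ ENNReal.ofReal s}

/-- `w` is a weight function with tail parameters `κ` and slowly varying `ℓ`:
nonnegative on `(0,1]`, integrates to one, and `w(t) ~ t^κ ℓ(1/t)` as `t → 0⁺`. -/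
structure IsWeight (w : ℝ → ℝ) (κ : ℝ) (ℓ : ℝ → ℝ) : Prop where
  nonneg : ∀ t ∈ Ioc (0:ℝ) 1, 0 ≤ w t
  total : (∫ t in Ioc (0:ℝ) 1, w t) = 1
  kappa_gt : -1 < κ
  slow : RegVary ℓ 0
  asym : Tendsto (fun t : ℝ => w t / (t ^ κ * ℓ (1 / t))) (𝓝[>] (0:ℝ)) (𝓝 1)

/-- Tail-weighted risk measure `ρ_{1-β}(P) = ∫₀¹ w(t) v_{1-βt}(P) dt`, `[0,∞]`-valued. -/
def tailRisk (w : ℝ → ℝ) (β : ℝ) (P : Measure ℝ) : ℝ≥0∞ :=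
  ∫⁻ t in Ioc (0:ℝ) 1, ENNReal.ofReal (w t * VaR P (β * t))

/-- Worst-case risk over a set of measures. -/
def worstRisk (w : ℝ → ℝ) (β : ℝ) (S : Set (Measure ℝ)) : ℝ≥0∞ :=
  ⨆ P ∈ S, tailRisk w β P

/-- Worst-case Value-at-Risk over a set of measures. -/
def worstVaR (S : Set (Measure ℝ)) (s : ℝ) : ℝ :=
  ⨆ P ∈ S, VaR P s

/-- Survival function `F̄_P(x) = P((x,∞))`. -/
def survival (P : Measure ℝ) (x : ℝ) : ℝ := (P (Ioi x)).toReal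

/-- `P` is heavy-tailed with index `γ`: its survival function is `RV(-γ)`. -/
def HeavyTailed (P : Measure ℝ) (γ : ℝ) : Prop := RegVary (survival P) (-γ)

/-- Cumulative hazard `Λ_P(x) = - log P((x,∞))`. -/
def hazard (P : Measure ℝ) (x : ℝ) : ℝ := - Real.log (survival P x)

/-- `P` has Weibull-type tails with index `γ`: its cumulative hazard is `RV(γ)`. -/
def WeibullTailed (P : Measure ℝ) (γ : ℝ) : Prop := RegVary (hazard P) γ

/-- Couplings of two measures on `ℝ`. -/
def Couplings (P R : Measure ℝ) : Set (Measure (ℝ × ℝ)) :=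
  {π | π.map Prod.fst = P ∧ π.map Prod.snd = R}

/-- `p`-Wasserstein distance. -/
def Wdist (p : ℝ) (P R : Measure ℝ) : ℝ≥0∞ :=
  (⨅ π ∈ Couplings P R, ∫⁻ z : ℝ × ℝ, ENNReal.ofReal (|z.1 - z.2| ^ p) ∂π) ^ (1 / p)

/-- Wasserstein ball of radius `δ` around `P₀`. -/
def WBall (p δ : ℝ) (P₀ : Measure ℝ) : Set (Measure ℝ) :=
  {P | IsProbabilityMeasure P ∧ Wdist p P P₀ ≤ ENNReal.ofReal δ}

/-- `φ`-divergence `D_φ(P,R)`, equal to `+∞` unless `P ≪ R`. -/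
def phiDiv {α : Type*} [MeasurableSpace α] (φ : ℝ → ℝ) (P R : Measure α) : ℝ≥0∞ :=
  if P ≪ R then ∫⁻ x, ENNReal.ofReal (φ (P.rnDeriv R x).toReal) ∂ R else ⊤

/-- `φ`-divergence ball of radius `δ` around `R`. -/
def phiBall {α : Type*} [MeasurableSpace α] (φ : ℝ → ℝ) (δ : ℝ) (R : Measure α) :
    Set (Measure α) :=
  {P | IsProbabilityMeasure P ∧ phiDiv φ P R ≤ ENNReal.ofReal δ}

/-- The smoothness assumption on `φ`: twice differentiable, convex,
`φ(1) = φ'(1) = 0`, and `φ(x)/x → ∞`. -/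
structure PhiSmooth (φ : ℝ → ℝ) : Prop where
  nonneg : ∀ x : ℝ, 0 ≤ x → 0 ≤ φ x
  diff1 : Differentiable ℝ φ
  diff2 : Differentiable ℝ (deriv φ)
  convex : ConvexOn ℝ (Ici 0) φ
  at_one : φ 1 = 0
  deriv_one : deriv φ 1 = 0
  superlinear : Tendsto (fun x : ℝ => φ x / x) atTop atTop

/-- Conditional Value-at-Risk `C_{1-β}(P) = β⁻¹ ∫₀^β v_{1-s}(P) ds`. -/
def CVaR (β : ℝ) (P : Measure ℝ) : ℝ := β⁻¹ * ∫ s in Ioc (0:ℝ) β, VaR P s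

/-!
Write `S` for the survival function of `P₀` and `θ = γ' / γ ∈ (0, 1)`. Feeding into the quantile
map `VaR P₀` a variable on `(0, 1)` with density `θ s ^ (θ - 1)` instead of a uniform one gives a
law `Q` with survival function `S ^ θ ∈ RV(-γ')`, and its density with respect to `P₀` is at most
`θ S ^ (θ - 1)`. By convexity of `φ`, the mixture `(1 - ε) P₀ + ε Q` has `φ`-divergence at most
`ε D_φ(Q, P₀)` from `P₀`, and its survival function `(1 - ε) S + ε S ^ θ` is still `RV(-γ')`
since `S = o(S ^ θ)`. So it suffices that `D_φ(Q, P₀) < ∞`. A Potter bound `φ(y) ≲ y ^ q` with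
`p < q < 1 / (1 - θ)` reduces this to `∫ S ^ (-(1 - θ) q) dP₀ < ∞`, which holds because the doubling
property of `S` gives `S (VaR P₀ s) ≥ c s` and `(1 - θ) q < 1`.
-/

lemma ENNReal.exists_ofReal_mul_le {a : ℝ≥0∞} (ha : a ≠ ⊤) {δ : ℝ} (hδ : 0 < δ) :
    ∃ ε, 0 < ε ∧ ε ≤ 1 ∧ ENNReal.ofReal ε * a ≤ ENNReal.ofReal δ := by
  obtain ⟨b, hb, rfl⟩ : ∃ b, 0 ≤ b ∧ a = ENNReal.ofReal b :=
    ⟨a.toReal, ENNReal.toReal_nonneg, (ENNReal.ofReal_toReal ha).symm⟩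
  refine ⟨min 1 (δ / (b + 1)), by positivity, min_le_left _ _, ?_⟩
  rw [← ENNReal.ofReal_mul (by positivity)]
  refine ENNReal.ofReal_le_ofReal ?_
  calc min 1 (δ / (b + 1)) * b ≤ δ / (b + 1) * (b + 1) :=
        mul_le_mul (min_le_right _ _) (by linarith) hb (by positivity)
    _ = δ := div_mul_cancel₀ _ (by positivity)

lemma le_of_le_on_Icc_of_map_two_mul_le {ψ : ℝ → ℝ} {Y B : ℝ} (hY : 0 < Y)
    (hB : ∀ y ∈ Icc Y (2 * Y), ψ y ≤ B) (hψ : ∀ y, Y ≤ y → ψ (2 * y) ≤ ψ y) :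
    ∀ y, Y ≤ y → ψ y ≤ B := by
  have hdyadic : ∀ n : ℕ, ∀ y ∈ Icc Y (2 ^ n * Y), ψ y ≤ B := by
    intro n
    induction n with
    | zero => exact fun y hy => hB y ⟨hy.1, by linarith [hy.2, one_mul Y]⟩
    | succ n ih =>
      rintro y ⟨hYy, hy⟩
      rcases le_total y (2 * Y) with h | h
      · exact hB y ⟨hYy, h⟩
      · calc ψ y = ψ (2 * (y / 2)) := by ring_nf
          _ ≤ ψ (y / 2) := hψ _ (by linarith)
          _ ≤ B := ih (y / 2) ⟨by linarith, by rw [pow_succ] at hy; linarith⟩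
  intro y hy
  obtain ⟨n, hn⟩ := pow_unbounded_of_one_lt (y / Y) one_lt_two
  exact hdyadic n y ⟨hy, by rw [div_lt_iff₀ hY] at hn; linarith⟩

namespace RegVary

variable {f g : ℝ → ℝ} {ρ q : ℝ}

lemma eventually_ne_zero (hf : RegVary f ρ) : ∀ᶠ t in atTop, f t ≠ 0 := by
  filter_upwards [(hf 1 one_pos).eventually_ne (by simp : (1:ℝ) ^ ρ ≠ 0)] with t ht h0
  simp [h0] at ht

lemma const_mul (hf : RegVary f ρ) {c : ℝ} (hc : c ≠ 0) : RegVary (fun t => c * f t) ρ :=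
  fun x hx => (hf x hx).congr fun _ => (mul_div_mul_left _ _ hc).symm

lemma rpow (hf : RegVary f ρ) (hpos : ∀ᶠ t in atTop, 0 < f t) (θ : ℝ) :
    RegVary (fun t => f t ^ θ) (ρ * θ) := by
  intro x hx
  have hlim := (Real.continuousAt_rpow_const _ θ
    (Or.inl (Real.rpow_pos_of_pos hx ρ).ne')).tendsto.comp (hf x hx)
  rw [← Real.rpow_mul hx.le] at hlim
  refine hlim.congr' ?_
  filter_upwards [hpos, (tendsto_id.atTop_mul_const hx).eventually hpos] with t ht htx
  exact Real.div_rpow htx.le ht.le θ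

lemma add_isLittleO (hg : RegVary g ρ) (hfg : f =o[atTop] g) : RegVary (f + g) ρ := by
  intro x hx
  have hx' : Tendsto (fun t => t * x) atTop atTop := tendsto_id.atTop_mul_const hx
  have h0 := hfg.tendsto_div_nhds_zero
  have hlim := (((h0.comp hx').add_const 1).mul (hg x hx)).div (h0.add_const 1) (by norm_num)
  simp only [zero_add, one_mul, div_one] at hlim
  refine hlim.congr' ?_
  filter_upwards [hg.eventually_ne_zero, hx'.eventually hg.eventually_ne_zero] with t ht htx
  simp only [Function.comp, Pi.div_apply, Pi.add_apply]
  rw [div_add_one htx, div_add_one ht, div_mul_div_cancel₀ htx, div_div_div_cancel_right₀ ht]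

lemma exists_eventually_div_two_le_mul (hf : RegVary f ρ)
    (hpos : ∀ᶠ t in atTop, 0 < f t) : ∃ K, ∀ᶠ x in atTop, f (x / 2) ≤ K * f x := by
  have h2ρ : 0 < (2 : ℝ) ^ ρ / 2 := by positivity
  have hdbl : ∀ᶠ t in atTop, f t ≤ ((2 : ℝ) ^ ρ / 2)⁻¹ * f (t * 2) := by
    filter_upwards [(hf 2 two_pos).eventually_const_lt (half_lt_self (by positivity)), hpos]
      with t hratio ht
    rw [lt_div_iff₀ ht] at hratio
    rw [le_inv_mul_iff₀ h2ρ]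
    exact hratio.le
  refine ⟨((2 : ℝ) ^ ρ / 2)⁻¹, ?_⟩
  filter_upwards [(tendsto_id.atTop_div_const two_pos).eventually hdbl] with x hx
  rwa [id, div_mul_cancel₀ x two_ne_zero] at hx

theorem exists_abs_le_mul_rpow (hf : RegVary f ρ) (hc : Continuous f) (hq : ρ < q) :
    ∃ Y > 0, ∃ C, ∀ y, Y ≤ y → |f y| ≤ C * y ^ q := by
  have hratio : ∀ᶠ t in atTop, |f (t * 2) / f t| < 2 ^ q := by
    have hlim := (hf 2 two_pos).abs
    rw [abs_of_pos (by positivity)] at hlim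
    exact hlim.eventually_lt_const (Real.rpow_lt_rpow_of_exponent_lt one_lt_two hq)
  obtain ⟨Y₀, hY₀⟩ := (hratio.and hf.eventually_ne_zero).exists_forall_of_atTop
  set Y := max Y₀ 1
  have hY : 0 < Y := lt_max_of_lt_right one_pos
  set ψ := fun y => |f y| / y ^ q
  have hψ : ∀ y, Y ≤ y → ψ (2 * y) ≤ ψ y := by
    intro y hy
    obtain ⟨hlt, hne⟩ := hY₀ y ((le_max_left _ _).trans hy)
    have hy0 : 0 < y := hY.trans_le hy
    rw [abs_div, div_lt_iff₀ (abs_pos.mpr hne), mul_comm y] at hlt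
    simp only [ψ]
    rw [Real.mul_rpow zero_le_two hy0.le, div_le_div_iff₀ (by positivity) (by positivity)]
    nlinarith [Real.rpow_pos_of_pos hy0 q]
  have hψc : ContinuousOn ψ (Icc Y (2 * Y)) := by
    refine hc.abs.continuousOn.div (continuousOn_id.rpow_const fun y hy => ?_) fun y hy => ?_
    · exact Or.inl (hY.trans_le hy.1).ne'
    · exact (Real.rpow_pos_of_pos (hY.trans_le hy.1) q).ne'
  obtain ⟨B, hB⟩ := isCompact_Icc.bddAbove_image hψc
  refine ⟨Y, hY, B, fun y hy => ?_⟩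
  have hle := le_of_le_on_Icc_of_map_two_mul_le hY (fun y hy => hB (mem_image_of_mem ψ hy)) hψ y hy
  rwa [div_le_iff₀ (Real.rpow_pos_of_pos (hY.trans_le hy) q)] at hle

theorem exists_abs_le_add_mul_rpow (hf : RegVary f ρ) (hc : Continuous f) (hq : ρ < q) :
    ∃ A C, 0 ≤ C ∧ ∀ y, 0 ≤ y → |f y| ≤ A + C * y ^ q := by
  obtain ⟨Y, hY, C, hC⟩ := hf.exists_abs_le_mul_rpow hc hq
  obtain ⟨A, hA⟩ := isCompact_Icc.bddAbove_image (hc.abs.continuousOn (s := Icc 0 Y))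
  have hA0 : 0 ≤ A := (abs_nonneg _).trans (hA (mem_image_of_mem _ ⟨le_rfl, hY.le⟩))
  refine ⟨A, max C 0, le_max_right _ _, fun y hy => ?_⟩
  have hyq := Real.rpow_nonneg hy q
  rcases le_total y Y with h | h
  · nlinarith [hA (mem_image_of_mem _ ⟨hy, h⟩), le_max_right C 0]
  · nlinarith [hC y h, le_max_left C 0]

end RegVary

lemma survival_nonneg (P : Measure ℝ) (x : ℝ) : 0 ≤ survival P x := ENNReal.toReal_nonneg

section Quantile

open ProbabilityTheory

variable {P : Measure ℝ} [IsProbabilityMeasure P]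

lemma survival_eq_one_sub_cdf : survival P = fun x => 1 - cdf P x := by
  ext x
  rw [cdf_eq_real, ← probReal_compl_eq_one_sub measurableSet_Iic, compl_Iic]
  rfl

lemma antitone_survival : Antitone (survival P) := by
  rw [survival_eq_one_sub_cdf]
  exact fun x y hxy => sub_le_sub_left (monotone_cdf P hxy) 1

lemma survival_le_one (x : ℝ) : survival P x ≤ 1 := by
  rw [survival_eq_one_sub_cdf]
  linarith [cdf_nonneg P x]

lemma tendsto_survival_atTop : Tendsto (survival P) atTop (𝓝 0) := by
  rw [survival_eq_one_sub_cdf, ← sub_self (1 : ℝ)]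
  exact (tendsto_cdf_atTop P).const_sub 1

lemma tendsto_survival_atBot : Tendsto (survival P) atBot (𝓝 1) := by
  rw [survival_eq_one_sub_cdf]
  simpa using (tendsto_cdf_atBot P).const_sub 1

lemma continuousWithinAt_survival_Ici (x : ℝ) : ContinuousWithinAt (survival P) (Ici x) x := by
  rw [survival_eq_one_sub_cdf]
  exact continuousWithinAt_const.sub ((cdf P).right_continuous x)

lemma lt_VaR_iff {s : ℝ} (hs : s ∈ Ioo 0 1) (t : ℝ) : t < VaR P s ↔ s < survival P t := by
  have hset : {u | P (Ioi u) ≤ ENNReal.ofReal s} = {u | survival P u ≤ s} := by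
    ext u
    exact ENNReal.le_ofReal_iff_toReal_le (measure_ne_top P _) hs.1.le
  have hne : {u | survival P u ≤ s}.Nonempty :=
    ((tendsto_survival_atTop (P := P)).eventually (eventually_le_nhds hs.1)).exists
  have hbdd : BddBelow {u | survival P u ≤ s} := by
    obtain ⟨x₀, hx₀⟩ := eventually_atBot.mp
      ((tendsto_survival_atBot (P := P)).eventually (eventually_gt_nhds hs.2))
    exact ⟨x₀, fun u hu => not_lt.mp fun h => (hx₀ u h.le).not_ge hu⟩
  rw [VaR, hset]
  constructor
  · intro ht
    by_contra! h
    exact (csInf_le hbdd h).not_gt ht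
  · intro hst
    by_contra! h
    have hright : ∀ x, t < x → survival P x ≤ s := fun x hx => by
      obtain ⟨y, hy, hyx⟩ := exists_lt_of_csInf_lt hne (h.trans_lt hx)
      exact (antitone_survival hyx.le).trans hy
    exact hst.not_ge <| le_of_tendsto ((continuousWithinAt_survival_Ici t).mono Ioi_subset_Ici_self)
      (eventually_nhdsWithin_of_forall hright)

lemma survival_VaR_le {s : ℝ} (hs : s ∈ Ioo 0 1) : survival P (VaR P s) ≤ s :=
  not_lt.mp fun h => lt_irrefl _ ((lt_VaR_iff (P := P) hs _).mpr h)

lemma antitoneOn_VaR : AntitoneOn (VaR P) (Ioo 0 1) := fun _ hs _ hs' hss' =>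
  le_of_forall_lt fun t ht => (lt_VaR_iff hs t).mpr <|
    hss'.trans_lt ((lt_VaR_iff hs' t).mp ht)

lemma aemeasurable_VaR {μ : Measure ℝ} (hμ : μ ≪ volume.restrict (Ioo 0 1)) :
    AEMeasurable (VaR P) μ :=
  (aemeasurable_restrict_of_antitoneOn measurableSet_Ioo antitoneOn_VaR).mono_ac hμ

lemma map_VaR_withDensity_Ioi (w : ℝ → ℝ≥0∞) (t : ℝ) :
    ((volume.restrict (Ioo 0 1)).withDensity w).map (VaR P) (Ioi t) =
      ∫⁻ s in Ioo 0 (survival P t), w s := by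
  rw [Measure.map_apply_of_aemeasurable (aemeasurable_VaR (withDensity_absolutelyContinuous _ _))
    measurableSet_Ioi, withDensity_apply', Measure.restrict_restrict' measurableSet_Ioo]
  congr 2
  ext s
  simp only [mem_inter_iff, mem_preimage, mem_Ioi, mem_Ioo]
  constructor
  · rintro ⟨ht, hs⟩
    exact ⟨hs.1, (lt_VaR_iff hs t).mp ht⟩
  · rintro ⟨hs0, hst⟩
    have hs : s ∈ Ioo 0 1 := ⟨hs0, hst.trans_le (survival_le_one t)⟩
    exact ⟨(lt_VaR_iff hs t).mpr hst, hs⟩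

instance isProbabilityMeasure_volume_restrict_Ioo_zero_one :
    IsProbabilityMeasure (volume.restrict (Ioo (0 : ℝ) 1)) :=
  ⟨by simp⟩

lemma map_VaR_volume : (volume.restrict (Ioo 0 1)).map (VaR P) = P := by
  have := Measure.isProbabilityMeasure_map (μ := volume.restrict (Ioo (0 : ℝ) 1))
    (aemeasurable_VaR (P := P) .rfl)
  refine Measure.ext_of_Iic _ _ fun t => ?_
  rw [← compl_Ioi, prob_compl_eq_one_sub measurableSet_Ioi, prob_compl_eq_one_sub measurableSet_Ioi]
  congr 1
  have h := map_VaR_withDensity_Ioi (P := P) 1 t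
  rw [withDensity_one] at h
  rw [h, Pi.one_def, setLIntegral_one, Real.volume_Ioo, sub_zero]
  exact ENNReal.ofReal_toReal (measure_ne_top P _)

lemma lintegral_comp_VaR {f : ℝ → ℝ≥0∞} (hf : Measurable f) :
    ∫⁻ s in Ioo 0 1, f (VaR P s) = ∫⁻ x, f x ∂P := by
  rw [← lintegral_map' hf.aemeasurable (aemeasurable_VaR .rfl), map_VaR_volume]

end Quantile

section SurvivalPow

variable {P : Measure ℝ} [IsProbabilityMeasure P] {θ : ℝ}

lemma lintegral_Ioo_mul_rpow_sub_one (hθ : 0 < θ) {a : ℝ} (ha : 0 ≤ a) :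
    ∫⁻ s in Ioo 0 a, ENNReal.ofReal (θ * s ^ (θ - 1)) = ENNReal.ofReal (a ^ θ) := by
  have hint : IntegrableOn (fun s => θ * s ^ (θ - 1)) (Ioo 0 a) :=
    ((intervalIntegrable_iff_integrableOn_Ioo_of_le ha).mp
      (intervalIntegral.intervalIntegrable_rpow' (by linarith))).const_mul θ
  rw [← ofReal_integral_eq_lintegral_ofReal hint]
  · rw [← integral_Ioc_eq_integral_Ioo, ← intervalIntegral.integral_of_le ha,
      intervalIntegral.integral_const_mul, integral_rpow (Or.inl (by linarith))]
    simp only [sub_add_cancel, Real.zero_rpow hθ.ne', sub_zero]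
    field_simp
  · filter_upwards [ae_restrict_mem measurableSet_Ioo] with s hs
    exact mul_nonneg hθ.le (Real.rpow_nonneg hs.1.le _)

def survivalPow (P : Measure ℝ) (θ : ℝ) : Measure ℝ :=
  ((volume.restrict (Ioo 0 1)).withDensity fun s => ENNReal.ofReal (θ * s ^ (θ - 1))).map (VaR P)

lemma survivalPow_Ioi (hθ : 0 < θ) (t : ℝ) :
    survivalPow P θ (Ioi t) = ENNReal.ofReal (survival P t ^ θ) := by
  rw [survivalPow, map_VaR_withDensity_Ioi, lintegral_Ioo_mul_rpow_sub_one hθ (survival_nonneg P t)]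

lemma survival_survivalPow (hθ : 0 < θ) (t : ℝ) :
    survival (survivalPow P θ) t = survival P t ^ θ := by
  rw [survival, survivalPow_Ioi hθ,
    ENNReal.toReal_ofReal (Real.rpow_nonneg (survival_nonneg P t) _)]

lemma isProbabilityMeasure_survivalPow (hθ : 0 < θ) : IsProbabilityMeasure (survivalPow P θ) := by
  constructor
  rw [survivalPow, Measure.map_apply_of_aemeasurable
    (aemeasurable_VaR (withDensity_absolutelyContinuous _ _)) MeasurableSet.univ, preimage_univ,
    withDensity_apply _ MeasurableSet.univ, Measure.restrict_univ,
    lintegral_Ioo_mul_rpow_sub_one hθ zero_le_one, Real.one_rpow, ENNReal.ofReal_one]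

lemma survivalPow_le_withDensity (hS : ∀ x, 0 < survival P x) (hθ0 : 0 ≤ θ) (hθ1 : θ ≤ 1) :
    survivalPow P θ ≤ P.withDensity fun x => ENNReal.ofReal (θ * survival P x ^ (θ - 1)) := by
  set g := fun x => ENNReal.ofReal (θ * survival P x ^ (θ - 1))
  have hg : Measurable g :=
    ((antitone_survival.measurable.pow_const _).const_mul θ).ennreal_ofReal
  have hμ : AEMeasurable (VaR P) (volume.restrict (Ioo 0 1)) := aemeasurable_VaR .rfl
  refine Measure.le_iff.mpr fun A hA => ?_
  rw [survivalPow, Measure.map_apply_of_aemeasurable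
    (aemeasurable_VaR (withDensity_absolutelyContinuous _ _)) hA, withDensity_apply',
    withDensity_apply _ hA, ← lintegral_indicator hA, ← lintegral_comp_VaR (hg.indicator hA),
    ← lintegral_indicator₀ (hμ.nullMeasurable hA)]
  refine lintegral_mono_ae ?_
  filter_upwards [ae_restrict_mem measurableSet_Ioo] with s hs
  by_cases hsA : VaR P s ∈ A
  · rw [indicator_of_mem (mem_preimage.mpr hsA), indicator_of_mem hsA]
    exact ENNReal.ofReal_le_ofReal <| mul_le_mul_of_nonneg_left
      (Real.rpow_le_rpow_of_nonpos (hS _) (survival_VaR_le hs) (by linarith)) hθ0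
  · rw [indicator_of_notMem (mt mem_preimage.mp hsA)]
    exact zero_le

lemma survivalPow_absolutelyContinuous (hS : ∀ x, 0 < survival P x) (hθ0 : 0 ≤ θ)
    (hθ1 : θ ≤ 1) : survivalPow P θ ≪ P :=
  (Measure.absolutelyContinuous_of_le (survivalPow_le_withDensity hS hθ0 hθ1)).trans
    (withDensity_absolutelyContinuous _ _)

end SurvivalPow

section PhiDiv

variable {α : Type*} [MeasurableSpace α] {φ : ℝ → ℝ} {P Q : Measure α} {ε : ℝ}

lemma MeasureTheory.Measure.rnDeriv_le_of_le_withDensity [SigmaFinite P] {g : α → ℝ≥0∞}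
    (h : Q ≤ P.withDensity g) : Q.rnDeriv P ≤ᵐ[P] g :=
  ae_le_of_forall_setLIntegral_le_of_sigmaFinite (Measure.measurable_rnDeriv Q P)
    fun A hA _ => calc
      ∫⁻ x in A, Q.rnDeriv P x ∂P ≤ Q A := Measure.setLIntegral_rnDeriv_le A
      _ ≤ P.withDensity g A := h A
      _ = ∫⁻ x in A, g x ∂P := withDensity_apply _ hA

instance isFiniteMeasure_ofReal_smul [IsFiniteMeasure P] (c : ℝ) :
    IsFiniteMeasure (ENNReal.ofReal c • P) :=
  ⟨ENNReal.mul_lt_top ENNReal.ofReal_lt_top (measure_lt_top _ _)⟩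

def mixture (ε : ℝ) (P Q : Measure α) : Measure α :=
  ENNReal.ofReal (1 - ε) • P + ENNReal.ofReal ε • Q

lemma mixture_apply (s : Set α) :
    mixture ε P Q s = ENNReal.ofReal (1 - ε) * P s + ENNReal.ofReal ε * Q s := rfl

lemma isProbabilityMeasure_mixture [IsProbabilityMeasure P] [IsProbabilityMeasure Q]
    (hε0 : 0 ≤ ε) (hε1 : ε ≤ 1) : IsProbabilityMeasure (mixture ε P Q) := by
  constructor
  rw [mixture_apply, measure_univ, measure_univ, mul_one, mul_one,
    ← ENNReal.ofReal_add (sub_nonneg.mpr hε1) hε0, sub_add_cancel, ENNReal.ofReal_one]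

lemma mixture_absolutelyContinuous (hQP : Q ≪ P) : mixture ε P Q ≪ P :=
  (Measure.AbsolutelyContinuous.rfl.smul_left _).add_left (hQP.smul_left _)

lemma rnDeriv_mixture [IsFiniteMeasure P] [IsFiniteMeasure Q] :
    (mixture ε P Q).rnDeriv P =ᵐ[P]
      fun x => ENNReal.ofReal (1 - ε) + ENNReal.ofReal ε * Q.rnDeriv P x := by
  filter_upwards [Measure.rnDeriv_add (ENNReal.ofReal (1 - ε) • P) (ENNReal.ofReal ε • Q) P,
    Measure.rnDeriv_smul_left_of_ne_top P P ENNReal.ofReal_ne_top,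
    Measure.rnDeriv_smul_left_of_ne_top Q P ENNReal.ofReal_ne_top,
    Measure.rnDeriv_self P] with x hadd hP hQ hself
  rw [mixture, hadd, Pi.add_apply, hP, hQ, Pi.smul_apply, Pi.smul_apply, hself, smul_eq_mul,
    smul_eq_mul, mul_one]

theorem phiDiv_mixture_le (hconv : ConvexOn ℝ (Ici 0) φ) (hφ1 : φ 1 = 0) [IsFiniteMeasure P]
    [IsFiniteMeasure Q] (hQP : Q ≪ P) (hε0 : 0 ≤ ε) (hε1 : ε ≤ 1) :
    phiDiv φ (mixture ε P Q) P ≤ ENNReal.ofReal ε * phiDiv φ Q P := by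
  rw [phiDiv, if_pos (mixture_absolutelyContinuous hQP), phiDiv, if_pos hQP,
    ← lintegral_const_mul' _ _ ENNReal.ofReal_ne_top]
  refine lintegral_mono_ae ?_
  filter_upwards [rnDeriv_mixture (ε := ε) (P := P) (Q := Q), Q.rnDeriv_lt_top P] with x hx hfin
  rw [hx,
    ENNReal.toReal_add ENNReal.ofReal_ne_top (ENNReal.mul_ne_top ENNReal.ofReal_ne_top hfin.ne),
    ENNReal.toReal_mul, ENNReal.toReal_ofReal (sub_nonneg.mpr hε1), ENNReal.toReal_ofReal hε0,
    ← ENNReal.ofReal_mul hε0]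
  refine ENNReal.ofReal_le_ofReal ?_
  have hconvex := hconv.2 (mem_Ici.mpr zero_le_one)
    (mem_Ici.mpr (ENNReal.toReal_nonneg (a := Q.rnDeriv P x))) (sub_nonneg.mpr hε1) hε0
    (sub_add_cancel 1 ε)
  simpa [hφ1] using hconvex

theorem phiDiv_le_of_rnDeriv_le (hconv : ConvexOn ℝ (Ici 0) φ) (hQP : Q ≪ P) {g : α → ℝ}
    (hg0 : ∀ x, 0 ≤ g x) (hg : ∀ᵐ x ∂P, Q.rnDeriv P x ≤ ENNReal.ofReal (g x)) :
    phiDiv φ Q P ≤ ∫⁻ x, ENNReal.ofReal (max (φ 0) (φ (g x))) ∂P := by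
  rw [phiDiv, if_pos hQP]
  refine lintegral_mono_ae ?_
  filter_upwards [hg] with x hx
  refine ENNReal.ofReal_le_ofReal
    (hconv.le_on_segment (mem_Ici.mpr le_rfl) (mem_Ici.mpr (hg0 x)) ?_)
  rw [segment_eq_Icc (hg0 x)]
  exact ⟨ENNReal.toReal_nonneg, ENNReal.toReal_le_of_le_ofReal (hg0 x) hx⟩

end PhiDiv

lemma survival_mixture {P Q : Measure ℝ} [IsFiniteMeasure P] [IsFiniteMeasure Q] {ε : ℝ}
    (hε0 : 0 ≤ ε) (hε1 : ε ≤ 1) (t : ℝ) :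
    survival (mixture ε P Q) t = (1 - ε) * survival P t + ε * survival Q t := by
  rw [survival, mixture_apply,
    ENNReal.toReal_add (ENNReal.mul_ne_top ENNReal.ofReal_ne_top (measure_ne_top _ _))
      (ENNReal.mul_ne_top ENNReal.ofReal_ne_top (measure_ne_top _ _)),
    ENNReal.toReal_mul, ENNReal.toReal_mul, ENNReal.toReal_ofReal (sub_nonneg.mpr hε1),
    ENNReal.toReal_ofReal hε0]
  rfl

section HeavyTailed

variable {P : Measure ℝ} [IsProbabilityMeasure P] {γ : ℝ}

lemma HeavyTailed.survival_pos (hP : HeavyTailed P γ) (x : ℝ) : 0 < survival P x := by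
  obtain ⟨t, ht, hxt⟩ := (RegVary.eventually_ne_zero hP |>.and (eventually_ge_atTop x)).exists
  exact (survival_nonneg P x).lt_of_ne fun h0 =>
    ht (le_antisymm (h0 ▸ antitone_survival hxt) (survival_nonneg P t))

lemma exists_mul_le_survival_VaR (hS : ∀ x, 0 < survival P x) {K : ℝ}
    (hK : ∀ᶠ x in atTop, survival P (x / 2) ≤ K * survival P x) :
    ∃ c > 0, ∀ s ∈ Ioo 0 1, c * s ≤ survival P (VaR P s) := by
  obtain ⟨M, hM⟩ := (hK.and (eventually_gt_atTop 0)).exists_forall_of_atTop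
  have hK0 : 0 < K := pos_of_mul_pos_left ((hS _).trans_le (hM M le_rfl).1) (hS M).le
  refine ⟨min (survival P M) K⁻¹, lt_min (hS M) (inv_pos.mpr hK0), fun s hs => ?_⟩
  rcases le_or_gt (VaR P s) M with h | h
  · calc min (survival P M) K⁻¹ * s ≤ survival P M * 1 :=
          mul_le_mul (min_le_left _ _) hs.2.le hs.1.le (hS M).le
      _ ≤ survival P (VaR P s) := by rw [mul_one]; exact antitone_survival h
  · obtain ⟨hdbl, hpos⟩ := hM _ h.le
    have hs_lt : s < survival P (VaR P s / 2) :=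
      (lt_VaR_iff hs _).mp (half_lt_self hpos)
    calc min (survival P M) K⁻¹ * s ≤ K⁻¹ * s :=
        mul_le_mul_of_nonneg_right (min_le_right _ _) hs.1.le
      _ ≤ survival P (VaR P s) := by
          rw [inv_mul_le_iff₀ hK0]; exact hs_lt.le.trans hdbl

lemma lintegral_survival_rpow_neg_lt_top (hS : ∀ x, 0 < survival P x) {K : ℝ}
    (hK : ∀ᶠ x in atTop, survival P (x / 2) ≤ K * survival P x) {r : ℝ} (hr0 : 0 ≤ r)
    (hr1 : r < 1) : ∫⁻ x, ENNReal.ofReal (survival P x ^ (-r)) ∂P < ⊤ := by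
  obtain ⟨c, hc, hcS⟩ := exists_mul_le_survival_VaR hS hK
  rw [← lintegral_comp_VaR (antitone_survival.measurable.pow_const _).ennreal_ofReal]
  have hint : IntegrableOn (fun s : ℝ => c ^ (-r) * s ^ (-r)) (Ioo 0 1) :=
    ((intervalIntegral.integrableOn_Ioo_rpow_iff one_pos).mpr (by linarith)).const_mul _
  refine lt_of_le_of_lt (setLIntegral_mono' measurableSet_Ioo fun s hs => ?_) hint.lintegral_lt_top
  refine ENNReal.ofReal_le_ofReal ?_
  rw [← Real.mul_rpow hc.le hs.1.le]
  exact Real.rpow_le_rpow_of_nonpos (mul_pos hc hs.1) (hcS s hs) (neg_nonpos.mpr hr0)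

end HeavyTailed

section Construction

variable {P : Measure ℝ} [IsProbabilityMeasure P] {γ θ : ℝ}

lemma lintegral_max_phi_lt_top {φ : ℝ → ℝ} (hφ : Continuous φ) {p : ℝ} (hRV : RegVary φ p)
    (hS : ∀ x, 0 < survival P x) {K : ℝ}
    (hK : ∀ᶠ x in atTop, survival P (x / 2) ≤ K * survival P x) (hθ0 : 0 ≤ θ) (hθ1 : θ ≤ 1)
    {q : ℝ} (hpq : p < q) (hq0 : 0 < q) (hθq : (1 - θ) * q < 1) :
    ∫⁻ x, ENNReal.ofReal (max (φ 0) (φ (θ * survival P x ^ (θ - 1)))) ∂P < ⊤ := by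
  obtain ⟨A, C, hC, hφAC⟩ := hRV.exists_abs_le_add_mul_rpow hφ hpq
  have hφ0 : φ 0 ≤ A := by
    simpa [Real.zero_rpow hq0.ne'] using (le_abs_self _).trans (hφAC 0 le_rfl)
  have hbound : ∀ x, max (φ 0) (φ (θ * survival P x ^ (θ - 1))) ≤
      A + C * θ ^ q * survival P x ^ (-((1 - θ) * q)) := by
    intro x
    have hSx := survival_nonneg P x
    have hgx := (le_abs_self _).trans (hφAC (θ * survival P x ^ (θ - 1)) (by positivity))
    rw [Real.mul_rpow hθ0 (by positivity), ← Real.rpow_mul hSx] at hgx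
    have : 0 ≤ C * θ ^ q * survival P x ^ (-((1 - θ) * q)) := by positivity
    exact max_le (by linarith) (by ring_nf at hgx ⊢; linarith)
  calc ∫⁻ x, ENNReal.ofReal (max (φ 0) (φ (θ * survival P x ^ (θ - 1)))) ∂P
      ≤ ∫⁻ x, ENNReal.ofReal A + ENNReal.ofReal (C * θ ^ q) *
          ENNReal.ofReal (survival P x ^ (-((1 - θ) * q))) ∂P := lintegral_mono fun x => by
        rw [← ENNReal.ofReal_mul (by positivity)]
        exact (ENNReal.ofReal_le_ofReal (hbound x)).trans ENNReal.ofReal_add_le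
    _ < ⊤ := by
        rw [lintegral_add_left measurable_const,
          lintegral_const_mul _ (antitone_survival.measurable.pow_const _).ennreal_ofReal]
        exact ENNReal.add_lt_top.mpr ⟨by simp, ENNReal.mul_lt_top ENNReal.ofReal_lt_top
          (lintegral_survival_rpow_neg_lt_top hS hK (by nlinarith) hθq)⟩

theorem phiDiv_survivalPow_lt_top {φ : ℝ → ℝ} (hconv : ConvexOn ℝ (Ici 0) φ)
    (hφ : Continuous φ) {p : ℝ} (hRV : RegVary φ p) (hS : ∀ x, 0 < survival P x) {K : ℝ}
    (hK : ∀ᶠ x in atTop, survival P (x / 2) ≤ K * survival P x)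
    (hθ0 : 0 ≤ θ) (hθ1 : θ < 1) (hpθ : p * (1 - θ) < 1) :
    phiDiv φ (survivalPow P θ) P < ⊤ := by
  have h1θ : 0 < 1 - θ := by linarith
  obtain ⟨q, hpq, hq⟩ :=
    exists_between (max_lt ((lt_div_iff₀ h1θ).mpr hpθ) (by positivity : (0 : ℝ) < 1 / (1 - θ)))
  have hθq : (1 - θ) * q < 1 := by rwa [lt_div_iff₀ h1θ, mul_comm] at hq
  calc phiDiv φ (survivalPow P θ) P
      ≤ ∫⁻ x, ENNReal.ofReal (max (φ 0) (φ (θ * survival P x ^ (θ - 1)))) ∂P :=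
        phiDiv_le_of_rnDeriv_le hconv (survivalPow_absolutelyContinuous hS hθ0 hθ1.le)
          (fun x => mul_nonneg hθ0 (Real.rpow_nonneg (survival_nonneg P x) _))
          (Measure.rnDeriv_le_of_le_withDensity (survivalPow_le_withDensity hS hθ0 hθ1.le))
    _ < ⊤ := lintegral_max_phi_lt_top hφ hRV hS hK hθ0 hθ1.le
        ((le_max_left p 0).trans_lt hpq) ((le_max_right p 0).trans_lt hpq) hθq

theorem HeavyTailed.regVary_survival_mixture_survivalPow (hP : HeavyTailed P γ) (hθ0 : 0 < θ)
    (hθ1 : θ < 1) {ε : ℝ} (hε0 : 0 < ε) (hε1 : ε ≤ 1) :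
    RegVary (survival (mixture ε P (survivalPow P θ))) (-γ * θ) := by
  have hS := hP.survival_pos
  have := isProbabilityMeasure_survivalPow (P := P) hθ0
  have hsurv : survival (mixture ε P (survivalPow P θ)) =
      (fun t => (1 - ε) * survival P t) + fun t => ε * survival P t ^ θ := by
    ext t
    rw [survival_mixture hε0.le hε1, survival_survivalPow hθ0]
    rfl
  have hlittle : (fun t => survival P t) =o[atTop] fun t => survival P t ^ θ := by
    refine (Asymptotics.isLittleO_iff_tendsto' ?_).mpr ?_
    · exact Eventually.of_forall fun t h => absurd h (Real.rpow_pos_of_pos (hS t) θ).ne'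
    · have hlim := (Real.continuousAt_rpow_const 0 (1 - θ) (Or.inr (by linarith))).tendsto.comp
        (tendsto_survival_atTop (P := P))
      rw [Real.zero_rpow (by linarith)] at hlim
      refine hlim.congr fun t => ?_
      rw [Function.comp_apply, Real.rpow_sub (hS t), Real.rpow_one]
  rw [hsurv]
  exact RegVary.add_isLittleO ((RegVary.rpow hP (Eventually.of_forall hS) θ).const_mul hε0.ne')
    ((hlittle.const_mul_left _).const_mul_right hε0.ne')

end Construction

/-- for `φ ∈ RV(p)`, `p > 1`, and heavy-tailed `P₀` with index `γ`, the
φ-divergence ball contains, for every `γ' ∈ ((p-1)γ/p, γ)`, a distribution whose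
survival function is regularly varying with index `-γ'`. -/
theorem phiBall_contains_heavier_power_tail
    (φ : ℝ → ℝ) (δ p γ : ℝ) (hδ : 0 < δ) (hφ : PhiSmooth φ)
    (hp : 1 < p) (hRV : RegVary φ p)
    (P₀ : Measure ℝ) [IsProbabilityMeasure P₀]
    (hγ : 0 < γ) (hP : HeavyTailed P₀ γ) :
    ∀ γ' ∈ Ioo ((p - 1) * γ / p) γ,
      ∃ P₁ ∈ phiBall φ δ P₀, RegVary (survival P₁) (-γ') := by
  rintro γ' ⟨hγ'l, hγ'u⟩
  have hp0 : 0 < p := by linarith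
  set θ := γ' / γ
  have hθ0 : 0 < θ :=
    div_pos ((div_nonneg (mul_nonneg (by linarith) hγ.le) hp0.le).trans_lt hγ'l) hγ
  have hθ1 : θ < 1 := (div_lt_one hγ).mpr hγ'u
  have hγ' : γ' = γ * θ := (mul_div_cancel₀ _ hγ.ne').symm
  have hpθ : p * (1 - θ) < 1 := by
    rw [div_lt_iff₀ hp0] at hγ'l
    nlinarith
  have hS := hP.survival_pos
  obtain ⟨K, hK⟩ := RegVary.exists_eventually_div_two_le_mul hP (Eventually.of_forall hS)
  obtain ⟨ε, hε0, hε1, hεδ⟩ := ENNReal.exists_ofReal_mul_le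
    (phiDiv_survivalPow_lt_top hφ.convex hφ.diff1.continuous hRV hS hK hθ0.le hθ1 hpθ).ne hδ
  have := isProbabilityMeasure_survivalPow (P := P₀) hθ0
  refine ⟨mixture ε P₀ (survivalPow P₀ θ), ⟨isProbabilityMeasure_mixture hε0.le hε1, ?_⟩, ?_⟩
  · exact (phiDiv_mixture_le hφ.convex hφ.at_one
      (survivalPow_absolutelyContinuous hS hθ0.le hθ1.le) hε0.le hε1).trans hεδ
  · rw [hγ', neg_mul_eq_neg_mul]
    exact hP.regVary_survival_mixture_survivalPow hθ0 hθ1 hε0 hε1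
end
end

section
/- Let φ : [0,∞) → [0,∞] be a lower semicontinuous convex function with φ(1) = 0, δ ≥ 0, let L : ℝ^d → ℝ be Borel measurable, let P₀ be a probability measure on ℝ^d, and set P_Z = P₀ ∘ L^{−1}. Then for any functional ρ mapping probability measures on ℝ to [0,∞], sup_{P̃ ∈ B_{φ,δ}(P₀)} ρ(P̃ ∘ L^{−1}) = sup_{P ∈ B_{φ,δ}(P_Z)} ρ(P), where the first supremum is over probability measures on ℝ^d and the second over probability measures on ℝ. -/
open MeasureTheory Filter Set
open scoped ENNReal NNReal Topology Classical

noncomputable section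

/-! A `φ`-divergence can only decrease when both measures are pushed forward by `L`: the
density of `P ∘ L⁻¹` is the conditional `R`-average of `dP/dR` on the fibres of `L`, so Jensen's
inequality on each fibre gives `D_φ(P ∘ L⁻¹, R ∘ L⁻¹) ≤ D_φ(P, R)`. Conversely, every `Q ≪ R ∘ L⁻¹`
is the pushforward of the measure with density `(dQ/d(R ∘ L⁻¹)) ∘ L` with respect to `R`, and
the two divergences then coincide. So pushing forward by `L` maps `B_{φ,δ}(R)` onto
`B_{φ,δ}(R ∘ L⁻¹)`. -/

theorem ConvexOn.continuousOn_Ici_of_lowerSemicontinuous {φ : ℝ → ℝ} {a : ℝ}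
    (hconv : ConvexOn ℝ (Ici a) φ) (hlsc : LowerSemicontinuous φ) :
    ContinuousOn φ (Ici a) := by
  intro x hx
  rcases (mem_Ici.1 hx).eq_or_lt with rfl | hax
  · -- Upper semicontinuity at the endpoint comes from the chord over `[a, a + 1]`.
    have hchord : ∀ t ∈ Icc a (a + 1), φ t ≤ φ a + (t - a) * (φ (a + 1) - φ a) := by
      intro t ⟨hat, hta⟩
      have h := hconv.2 self_mem_Ici (mem_Ici.2 (le_add_of_nonneg_right zero_le_one))
        (sub_nonneg.2 hta : (0 : ℝ) ≤ a + 1 - t) (sub_nonneg.2 hat) (by ring)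
      rw [show (a + 1 - t) • a + (t - a) • (a + 1) = t by simp only [smul_eq_mul]; ring] at h
      simp only [smul_eq_mul] at h
      linarith
    have hupper :
        Tendsto (fun t => φ a + (t - a) * (φ (a + 1) - φ a)) (𝓝[Ici a] a) (𝓝 (φ a)) := by
      have : Continuous fun t => φ a + (t - a) * (φ (a + 1) - φ a) := by fun_prop
      simpa using (this.tendsto a).mono_left nhdsWithin_le_nhds
    have hIcc : Icc a (a + 1) ∈ 𝓝[Ici a] a :=
      Icc_mem_nhdsGE (lt_add_of_pos_right a zero_lt_one)
    refine tendsto_order.2 ⟨fun b hb => (hlsc a b hb).filter_mono nhdsWithin_le_nhds,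
      fun b hb => ?_⟩
    filter_upwards [hIcc, hupper.eventually_lt_const hb] with t ht hlt
    exact (hchord t ht).trans_lt hlt
  · have hint : ContinuousOn φ (interior (Ici a)) := hconv.continuousOn_interior
    rw [interior_Ici] at hint
    exact (hint.continuousAt (Ioi_mem_nhds hax)).continuousWithinAt

section Jensen

variable {Ω : Type*} [MeasurableSpace Ω] {μ : Measure Ω} [IsProbabilityMeasure μ] {φ : ℝ → ℝ}

theorem ConvexOn.ofReal_map_lintegral_le_of_nonneg (hconv : ConvexOn ℝ (Ici 0) φ)
    (hcont : ContinuousOn φ (Ici 0)) (hmeas : Measurable φ) (hnonneg : ∀ x, 0 ≤ x → 0 ≤ φ x)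
    {w : Ω → ℝ≥0∞} (hw : AEMeasurable w μ) (hint : ∫⁻ x, w x ∂μ ≠ ∞) :
    ENNReal.ofReal (φ (∫⁻ x, w x ∂μ).toReal) ≤ ∫⁻ x, ENNReal.ofReal (φ (w x).toReal) ∂μ := by
  by_cases htop : ∫⁻ x, ENNReal.ofReal (φ (w x).toReal) ∂μ = ∞
  · exact htop ▸ le_top
  have hφw : Integrable (fun x => φ (w x).toReal) μ := by
    refine ⟨(hmeas.comp_aemeasurable hw.ennreal_toReal).aestronglyMeasurable, ?_⟩
    rw [hasFiniteIntegral_iff_ofReal (ae_of_all _ fun x => hnonneg _ ENNReal.toReal_nonneg)]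
    exact lt_top_iff_ne_top.2 htop
  have hmean : ∫ x, (w x).toReal ∂μ = (∫⁻ x, w x ∂μ).toReal :=
    integral_toReal hw (ae_lt_top' hw hint)
  have hjensen : φ (∫⁻ x, w x ∂μ).toReal ≤ ∫ x, φ (w x).toReal ∂μ :=
    hmean ▸ hconv.map_integral_le hcont isClosed_Ici (ae_of_all _ fun _ => ENNReal.toReal_nonneg)
      (integrable_toReal_of_lintegral_ne_top hw hint) hφw
  calc ENNReal.ofReal (φ (∫⁻ x, w x ∂μ).toReal)
      ≤ ENNReal.ofReal (∫ x, φ (w x).toReal ∂μ) := ENNReal.ofReal_le_ofReal hjensen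
    _ = ∫⁻ x, ENNReal.ofReal (φ (w x).toReal) ∂μ :=
      ofReal_integral_eq_lintegral_ofReal hφw
        (ae_of_all _ fun x => hnonneg _ ENNReal.toReal_nonneg)

/-- Since `ENNReal.ofReal` truncates at `0`, `φ` may be replaced by the convex function `φ ⊔ 0`. -/
theorem ConvexOn.ofReal_map_lintegral_le (hconv : ConvexOn ℝ (Ici 0) φ)
    (hcont : ContinuousOn φ (Ici 0)) (hmeas : Measurable φ)
    {w : Ω → ℝ≥0∞} (hw : AEMeasurable w μ) (hint : ∫⁻ x, w x ∂μ ≠ ∞) :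
    ENNReal.ofReal (φ (∫⁻ x, w x ∂μ).toReal) ≤ ∫⁻ x, ENNReal.ofReal (φ (w x).toReal) ∂μ := by
  have h := (hconv.sup (convexOn_const 0 (convex_Ici 0))).ofReal_map_lintegral_le_of_nonneg
    (hcont.sup continuousOn_const) (hmeas.max measurable_const)
    (fun x _ => le_max_right _ _) hw hint
  simpa only [Pi.sup_apply, ENNReal.ofReal_max, ENNReal.ofReal_zero, max_zero] using h

end Jensen

section Pushforward

variable {X Y : Type*} [MeasurableSpace X] [MeasurableSpace Y] {φ : ℝ → ℝ} {L : X → Y}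

theorem absolutelyContinuous_of_phiDiv_ne_top {P R : Measure X} (h : phiDiv φ P R ≠ ∞) :
    P ≪ R := by
  by_contra hPR
  exact h (if_neg hPR)

theorem phiDiv_of_absolutelyContinuous {P R : Measure X} (h : P ≪ R) :
    phiDiv φ P R = ∫⁻ x, ENNReal.ofReal (φ (P.rnDeriv R x).toReal) ∂ R :=
  if_pos h

theorem map_withDensity_comp (hL : Measurable L) (R : Measure X) {g : Y → ℝ≥0∞}
    (hg : Measurable g) : (R.withDensity (g ∘ L)).map L = (R.map L).withDensity g := by
  ext s hs
  rw [Measure.map_apply hL hs, withDensity_apply _ (hL hs), withDensity_apply _ hs,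
    setLIntegral_map hs hg hL]
  rfl

theorem phiDiv_withDensity_comp (hmeas : Measurable φ) (hL : Measurable L) (R : Measure X)
    [SigmaFinite R] {g : Y → ℝ≥0∞} (hg : Measurable g) :
    phiDiv φ (R.withDensity (g ∘ L)) R = ∫⁻ y, ENNReal.ofReal (φ (g y).toReal) ∂(R.map L) := by
  rw [phiDiv_of_absolutelyContinuous (withDensity_absolutelyContinuous _ _),
    lintegral_map (f := fun y => ENNReal.ofReal (φ (g y).toReal))
      (hmeas.comp hg.ennreal_toReal).ennreal_ofReal hL]
  exact lintegral_congr_ae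
    ((Measure.rnDeriv_withDensity R (hg.comp hL)).mono fun x hx => by simp only [hx]; rfl)

variable [StandardBorelSpace X] [Nonempty X]

/-- `(R.map fun x => (L x, x)).condKernel y` is the conditional distribution under `R` of `x`
given `L x = y`. -/
theorem setLIntegral_lintegral_condKernel_graph (hL : Measurable L) (R : Measure X)
    [IsFiniteMeasure R] {F : Y × X → ℝ≥0∞} (hF : Measurable F) {s : Set Y}
    (hs : MeasurableSet s) :
    ∫⁻ y in s, ∫⁻ x, F (y, x) ∂(R.map fun x => (L x, x)).condKernel y ∂(R.map L) =
      ∫⁻ x in L ⁻¹' s, F (L x, x) ∂ R := by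
  have hgraph : Measurable fun x => (L x, x) := hL.prodMk measurable_id
  have hfst : (R.map fun x => (L x, x)).fst = R.map L := Measure.fst_map_prodMk measurable_id
  have h := Measure.setLIntegral_compProd (μ := (R.map fun x => (L x, x)).fst)
    (κ := (R.map fun x => (L x, x)).condKernel) hF hs MeasurableSet.univ
  rw [Measure.disintegrate, setLIntegral_map (hs.prod .univ) hF hgraph, hfst] at h
  simpa only [Measure.restrict_univ, mk_preimage_prod, preimage_univ, inter_univ] using h.symm

theorem rnDeriv_map_ae_eq_lintegral_condKernel (hL : Measurable L) {P R : Measure X}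
    [IsFiniteMeasure P] [IsFiniteMeasure R] (hPR : P ≪ R) :
    (P.map L).rnDeriv (R.map L) =ᵐ[R.map L]
      fun y => ∫⁻ x, P.rnDeriv R x ∂(R.map fun x => (L x, x)).condKernel y := by
  have hw : Measurable (P.rnDeriv R) := Measure.measurable_rnDeriv _ _
  refine ae_eq_of_forall_setLIntegral_eq_of_sigmaFinite (Measure.measurable_rnDeriv _ _)
    hw.lintegral_kernel fun t ht _ => ?_
  rw [Measure.setLIntegral_rnDeriv (hPR.map hL), Measure.map_apply hL ht,
    setLIntegral_lintegral_condKernel_graph hL R (F := fun p => P.rnDeriv R p.2)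
      (hw.comp measurable_snd) ht,
    Measure.setLIntegral_rnDeriv hPR]

theorem phiDiv_map_le (hconv : ConvexOn ℝ (Ici 0) φ) (hcont : ContinuousOn φ (Ici 0))
    (hmeas : Measurable φ) (hL : Measurable L) (P R : Measure X) [IsFiniteMeasure P]
    [IsFiniteMeasure R] :
    phiDiv φ (P.map L) (R.map L) ≤ phiDiv φ P R := by
  by_cases hPR : P ≪ R
  swap
  · rw [show phiDiv φ P R = ∞ from if_neg hPR]
    exact le_top
  have hrn := rnDeriv_map_ae_eq_lintegral_condKernel hL hPR
  have hw : Measurable (P.rnDeriv R) := Measure.measurable_rnDeriv _ _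
  set κ := (R.map fun x => (L x, x)).condKernel
  calc phiDiv φ (P.map L) (R.map L)
      = ∫⁻ y, ENNReal.ofReal (φ (∫⁻ x, P.rnDeriv R x ∂κ y).toReal) ∂(R.map L) := by
        rw [phiDiv_of_absolutelyContinuous (hPR.map hL)]
        exact lintegral_congr_ae (hrn.mono fun y hy => by simp only [hy])
    _ ≤ ∫⁻ y, ∫⁻ x, ENNReal.ofReal (φ (P.rnDeriv R x).toReal) ∂κ y ∂(R.map L) := by
        refine lintegral_mono_ae ?_
        filter_upwards [hrn, Measure.rnDeriv_lt_top (P.map L) (R.map L)] with y hy hlt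
        exact hconv.ofReal_map_lintegral_le hcont hmeas hw.aemeasurable (hy ▸ hlt).ne
    _ = phiDiv φ P R := by
        rw [phiDiv_of_absolutelyContinuous hPR]
        simpa only [Measure.restrict_univ, preimage_univ] using
          setLIntegral_lintegral_condKernel_graph hL R
            (F := fun p => ENNReal.ofReal (φ (P.rnDeriv R p.2).toReal))
            (hmeas.comp (hw.comp measurable_snd).ennreal_toReal).ennreal_ofReal MeasurableSet.univ

theorem image_map_phiBall (hconv : ConvexOn ℝ (Ici 0) φ) (hlsc : LowerSemicontinuous φ)
    (hL : Measurable L) (δ : ℝ) (R : Measure X) [IsFiniteMeasure R] :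
    (fun P => P.map L) '' phiBall φ δ R = phiBall φ δ (R.map L) := by
  ext Q
  constructor
  · rintro ⟨P, ⟨hP, hdiv⟩, rfl⟩
    exact ⟨Measure.isProbabilityMeasure_map hL.aemeasurable,
      (phiDiv_map_le hconv (hconv.continuousOn_Ici_of_lowerSemicontinuous hlsc) hlsc.measurable
        hL P R).trans hdiv⟩
  · rintro ⟨hQ, hdiv⟩
    have hQR : Q ≪ R.map L :=
      absolutelyContinuous_of_phiDiv_ne_top (ne_top_of_le_ne_top ENNReal.ofReal_ne_top hdiv)
    have hg := Measure.measurable_rnDeriv Q (R.map L)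
    have hmap : (R.withDensity (Q.rnDeriv (R.map L) ∘ L)).map L = Q := by
      rw [map_withDensity_comp hL R hg, Measure.withDensity_rnDeriv_eq Q _ hQR]
    have : IsProbabilityMeasure ((R.withDensity (Q.rnDeriv (R.map L) ∘ L)).map L) := by
      rwa [hmap]
    refine ⟨_, ⟨Measure.isProbabilityMeasure_of_map L, ?_⟩, hmap⟩
    rwa [phiDiv_withDensity_comp hlsc.measurable hL R hg, ← phiDiv_of_absolutelyContinuous hQR]

end Pushforward

theorem phiBall_pushforward_sup_eq_general
    (d : ℕ) (φ : ℝ → ℝ)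
    (hconv : ConvexOn ℝ (Ici 0) φ) (hlsc : LowerSemicontinuous φ)
    (δ : ℝ)
    (L : (Fin d → ℝ) → ℝ) (hL : Measurable L)
    (P₀ : Measure (Fin d → ℝ)) [IsProbabilityMeasure P₀]
    (ρ : Measure ℝ → ℝ≥0∞) :
    ⨆ P ∈ phiBall φ δ P₀, ρ (P.map L) = ⨆ P ∈ phiBall φ δ (P₀.map L), ρ P := by
  rw [← image_map_phiBall hconv hlsc hL δ P₀, iSup_image]

/-- lifting the DRO to the loss level: worst-case evaluation of any
law-invariant functional over a φ-divergence ball around `P₀` equals worst-case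
evaluation over the φ-divergence ball around the pushforward `P_Z = P₀ ∘ L⁻¹`. -/
theorem phiBall_pushforward_sup_eq
    (d : ℕ) (φ : ℝ → ℝ)
    (hconv : ConvexOn ℝ (Ici 0) φ) (hlsc : LowerSemicontinuous φ)
    (hnonneg : ∀ x : ℝ, 0 ≤ x → 0 ≤ φ x) (hone : φ 1 = 0)
    (δ : ℝ) (hδ : 0 ≤ δ)
    (L : (Fin d → ℝ) → ℝ) (hL : Measurable L)
    (P₀ : Measure (Fin d → ℝ)) [IsProbabilityMeasure P₀]
    (ρ : Measure ℝ → ℝ≥0∞) :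
    ⨆ P ∈ phiBall φ δ P₀, ρ (P.map L) = ⨆ P ∈ phiBall φ δ (P₀.map L), ρ P :=
  phiBall_pushforward_sup_eq_general d φ hconv hlsc δ L hL P₀ ρ

end
end
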